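/- arXiv:2406.06761 — 5 statements merged into one kernel-verified Lean document; each statement's English description precedes it below -/
import Mathlib

section
/- Let ν₁, …, ν_K and ν'₁, …, ν'_K be probability distributions on countable sets, and let ε₁, …, ε_K ≥ 0 and δ₁, …, δ_K ∈ [0,1] be such that for each j and every subset S of outcomes, ν_j(S) ≤ e^{ε_j} · ν'_j(S) + δ_j and ν'_j(S) ≤ e^{ε_j} · ν_j(S) + δ_j. Then the product distributions ν₁ ⊗ ⋯ ⊗ ν_K and ν'₁ ⊗ ⋯ ⊗ ν'_K satisfy, for every subset S of the product space, (ν₁ ⊗ ⋯ ⊗ ν_K)(S) ≤ e^{Σ_j ε_j} · (ν'₁ ⊗ ⋯ ⊗ ν'_K)(S) + Σ_j δ_j, and symmetrically with the roles of ν and ν' exchanged. -/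
/-! Each of the two inequalities composes on its own, and by induction on the number of factors
it suffices to treat two. Writing `S_x` for the section of `S` over `x`,
`(ν₁ ⊗ ν₂)(S) = ∑ₓ ν₁(x) ν₂(S_x)` and `ν₂(S_x) ≤ g(x) + D₂` with `g = min(1, E₂ ν₂'(S_·))`.
The first factor is handled by the functional form `∑ ν₁ g ≤ E₁ ∑ ν₁' g + D₁` of
indistinguishability, valid for every `g ≤ 1`: the excess `∑ (ν₁ - E₁ ν₁')⁺` equals
`ν₁(A) - E₁ ν₁'(A)` on `A = {ν₁ > E₁ ν₁'}`, so it is at most `D₁`. -/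

open scoped ENNReal

noncomputable def setProb {Ω : Type*} (ν : Ω → ℝ≥0∞) (S : Set Ω) : ℝ≥0∞ :=
  ∑' x : S, ν x

def IsProbDist {Ω : Type*} (ν : Ω → ℝ≥0∞) : Prop :=
  ∑' x, ν x = 1

def OneSidedIndist {α : Type*} (ν ν' : α → ℝ≥0∞) (E D : ℝ≥0∞) : Prop :=
  ∀ S, setProb ν S ≤ E * setProb ν' S + D

noncomputable def prodDist {α β : Type*} (ν₁ : α → ℝ≥0∞) (ν₂ : β → ℝ≥0∞) (p : α × β) : ℝ≥0∞ :=
  ν₁ p.1 * ν₂ p.2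

noncomputable def piDist {ι : Type*} [Fintype ι] {Ω : ι → Type*} (ν : ∀ j, Ω j → ℝ≥0∞)
    (f : ∀ j, Ω j) : ℝ≥0∞ :=
  ∏ j, ν j (f j)

section SetProb

variable {α β : Type*}

theorem setProb_eq_tsum_indicator (ν : α → ℝ≥0∞) (S : Set α) :
    setProb ν S = ∑' x, S.indicator ν x :=
  tsum_subtype S ν

theorem setProb_le_tsum (ν : α → ℝ≥0∞) (S : Set α) : setProb ν S ≤ ∑' x, ν x := by
  rw [setProb_eq_tsum_indicator]
  exact ENNReal.tsum_le_tsum fun x => S.indicator_le_self ν x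

theorem setProb_comp_equiv (e : α ≃ β) (ν : β → ℝ≥0∞) (S : Set α) :
    setProb (ν ∘ e) S = setProb ν (e.symm ⁻¹' S) := by
  rw [setProb_eq_tsum_indicator, setProb_eq_tsum_indicator, ← e.tsum_eq]
  refine tsum_congr fun a => ?_
  rw [← Set.indicator_comp_right, ← Set.preimage_comp, e.symm_comp_self, Set.preimage_id]

theorem setProb_prodDist (ν₁ : α → ℝ≥0∞) (ν₂ : β → ℝ≥0∞) (S : Set (α × β)) :
    setProb (prodDist ν₁ ν₂) S = ∑' x, ν₁ x * setProb ν₂ (Prod.mk x ⁻¹' S) := by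
  rw [setProb_eq_tsum_indicator, ENNReal.tsum_prod']
  refine tsum_congr fun x => ?_
  rw [setProb_eq_tsum_indicator, ← ENNReal.tsum_mul_left]
  refine tsum_congr fun y => ?_
  rw [← Set.indicator_comp_right (Prod.mk x)]
  exact Set.indicator_mul_right _ (fun _ => ν₁ x) ν₂

end SetProb

theorem IsProbDist.prodDist {α β : Type*} {ν₁ : α → ℝ≥0∞} {ν₂ : β → ℝ≥0∞}
    (h₁ : IsProbDist ν₁) (h₂ : IsProbDist ν₂) : IsProbDist (prodDist ν₁ ν₂) := by
  simp only [IsProbDist, _root_.prodDist, ENNReal.tsum_prod', ENNReal.tsum_mul_left,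
    ENNReal.tsum_mul_right]
  rw [h₂, mul_one, h₁]

namespace OneSidedIndist

variable {α β : Type*} {ν ν' : α → ℝ≥0∞} {E D : ℝ≥0∞}

theorem tsum_tsub_le (h : OneSidedIndist ν ν' E D) (hE : E ≠ ∞) (hν' : ∑' x, ν' x ≠ ∞) :
    ∑' x, (ν x - E * ν' x) ≤ D := by
  set A : Set α := {x | E * ν' x < ν x}
  have hexcess : ∑' x, (ν x - E * ν' x) = ∑' x : A, (ν x - E * ν' x) := by
    rw [tsum_subtype A fun x => ν x - E * ν' x]
    refine tsum_congr fun x => (Set.indicator_apply_eq_self.2 fun hx => ?_).symm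
    exact tsub_eq_zero_of_le (not_lt.1 hx)
  have hfin : ∑' x : A, E * ν' x ≠ ∞ := by
    rw [ENNReal.tsum_mul_left]
    exact ENNReal.mul_ne_top hE (ne_top_of_le_ne_top hν' (setProb_le_tsum ν' A))
  refine hexcess ▸ ENNReal.le_of_add_le_add_left hfin ?_
  calc ∑' x : A, E * ν' x + ∑' x : A, (ν x - E * ν' x)
      = setProb ν A := by
        rw [← ENNReal.tsum_add, setProb]
        exact tsum_congr fun x => add_tsub_cancel_of_le x.2.le
    _ ≤ E * setProb ν' A + D := h A
    _ = ∑' x : A, E * ν' x + D := by rw [setProb, ENNReal.tsum_mul_left]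

theorem tsum_mul_le (h : OneSidedIndist ν ν' E D) (hE : E ≠ ∞) (hν' : ∑' x, ν' x ≠ ∞)
    {g : α → ℝ≥0∞} (hg : ∀ x, g x ≤ 1) :
    ∑' x, ν x * g x ≤ E * ∑' x, ν' x * g x + D := by
  have hpoint : ∀ x, ν x * g x ≤ E * (ν' x * g x) + (ν x - E * ν' x) := fun x =>
    calc ν x * g x ≤ (E * ν' x + (ν x - E * ν' x)) * g x := by gcongr; exact le_add_tsub
      _ ≤ E * (ν' x * g x) + (ν x - E * ν' x) := by
        rw [add_mul, mul_assoc]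
        gcongr
        exact mul_le_of_le_one_right' (hg x)
  calc ∑' x, ν x * g x ≤ ∑' x, (E * (ν' x * g x) + (ν x - E * ν' x)) := ENNReal.tsum_le_tsum hpoint
    _ = E * ∑' x, ν' x * g x + ∑' x, (ν x - E * ν' x) := by
        rw [ENNReal.tsum_add, ENNReal.tsum_mul_left]
    _ ≤ E * ∑' x, ν' x * g x + D := by gcongr; exact h.tsum_tsub_le hE hν'

theorem prodDist {ν₁ ν₁' : α → ℝ≥0∞} {ν₂ ν₂' : β → ℝ≥0∞} {E₁ E₂ D₁ D₂ : ℝ≥0∞}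
    (h₁ : OneSidedIndist ν₁ ν₁' E₁ D₁) (h₂ : OneSidedIndist ν₂ ν₂' E₂ D₂) (hE₁ : E₁ ≠ ∞)
    (hν₁ : IsProbDist ν₁) (hν₁' : IsProbDist ν₁') (hν₂ : IsProbDist ν₂) :
    OneSidedIndist (_root_.prodDist ν₁ ν₂) (_root_.prodDist ν₁' ν₂') (E₁ * E₂) (D₁ + D₂) := by
  intro S
  set g : α → ℝ≥0∞ := fun x => min 1 (E₂ * setProb ν₂' (Prod.mk x ⁻¹' S))
  have hsection : ∀ x, setProb ν₂ (Prod.mk x ⁻¹' S) ≤ g x + D₂ := fun x =>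
    (le_min ((hν₂ ▸ setProb_le_tsum ν₂ _).trans le_self_add) (h₂ _)).trans_eq
      (min_add_add_right _ _ _)
  rw [setProb_prodDist, setProb_prodDist]
  calc ∑' x, ν₁ x * setProb ν₂ (Prod.mk x ⁻¹' S)
      ≤ ∑' x, ν₁ x * g x + (∑' x, ν₁ x) * D₂ := by
        rw [← ENNReal.tsum_mul_right, ← ENNReal.tsum_add]
        refine ENNReal.tsum_le_tsum fun x => ?_
        rw [← mul_add]
        gcongr
        exact hsection x
    _ ≤ E₁ * ∑' x, ν₁' x * g x + D₁ + D₂ := by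
        rw [hν₁, one_mul]
        gcongr
        exact h₁.tsum_mul_le hE₁ (hν₁'.symm ▸ ENNReal.one_ne_top) fun x => min_le_left _ _
    _ ≤ E₁ * ∑' x, ν₁' x * (E₂ * setProb ν₂' (Prod.mk x ⁻¹' S)) + D₁ + D₂ := by
        gcongr with x
        exact min_le_right _ _
    _ = E₁ * E₂ * ∑' x, ν₁' x * setProb ν₂' (Prod.mk x ⁻¹' S) + (D₁ + D₂) := by
        simp only [add_assoc, mul_assoc, ← ENNReal.tsum_mul_left, mul_left_comm E₂]

theorem comp_equiv (h : OneSidedIndist ν ν' E D) (e : β ≃ α) :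
    OneSidedIndist (ν ∘ e) (ν' ∘ e) E D := fun S => by
  simpa only [setProb_comp_equiv] using h (e.symm ⁻¹' S)

end OneSidedIndist

theorem piDist_eq_prodDist_comp {K : ℕ} {Ω : Fin (K + 1) → Type*} (ν : ∀ j, Ω j → ℝ≥0∞) :
    piDist ν = prodDist (ν 0) (piDist fun i : Fin K => ν i.succ) ∘ (Fin.consEquiv Ω).symm := by
  ext f
  simp [piDist, prodDist, Fin.prod_univ_succ, Fin.tail]

theorem IsProbDist.comp_equiv {α β : Type*} {ν : α → ℝ≥0∞} (h : IsProbDist ν) (e : β ≃ α) :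
    IsProbDist (ν ∘ e) :=
  (e.tsum_eq ν).trans h

theorem IsProbDist.piDist {K : ℕ} {Ω : Fin K → Type*} {ν : ∀ j, Ω j → ℝ≥0∞}
    (h : ∀ j, IsProbDist (ν j)) : IsProbDist (piDist ν) := by
  induction K with
  | zero => simp [IsProbDist, _root_.piDist]
  | succ K ih =>
    rw [piDist_eq_prodDist_comp]
    exact ((h 0).prodDist (ih fun i => h i.succ)).comp_equiv _

theorem OneSidedIndist.piDist {K : ℕ} {Ω : Fin K → Type*} {ν ν' : ∀ j, Ω j → ℝ≥0∞}
    {E D : Fin K → ℝ≥0∞} (h : ∀ j, OneSidedIndist (ν j) (ν' j) (E j) (D j))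
    (hE : ∀ j, E j ≠ ∞) (hν : ∀ j, IsProbDist (ν j)) (hν' : ∀ j, IsProbDist (ν' j)) :
    OneSidedIndist (piDist ν) (piDist ν') (∏ j, E j) (∑ j, D j) := by
  induction K with
  | zero =>
    have hone : ∀ μ : ∀ j, Ω j → ℝ≥0∞, _root_.piDist μ = 1 := fun μ =>
      funext fun _ => Finset.prod_of_isEmpty _
    simp [OneSidedIndist, hone]
  | succ K ih =>
    rw [piDist_eq_prodDist_comp, piDist_eq_prodDist_comp, Fin.prod_univ_succ, Fin.sum_univ_succ]
    have htail := ih (fun i => h i.succ) (fun i => hE i.succ) (fun i => hν i.succ)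
      (fun i => hν' i.succ)
    exact ((h 0).prodDist htail (hE 0) (hν 0) (hν' 0)
      (IsProbDist.piDist fun i => hν i.succ)).comp_equiv _

theorem composition_heterogeneous_general
    (K : ℕ)
    (Ω : Fin K → Type*)
    (ν ν' : ∀ j : Fin K, Ω j → ℝ≥0∞)
    (hprob : ∀ j, IsProbDist (ν j)) (hprob' : ∀ j, IsProbDist (ν' j))
    (ε δ : Fin K → ℝ) (hδ0 : ∀ j, 0 ≤ δ j)
    (hind : ∀ j, ∀ S : Set (Ω j),
      setProb (ν j) S ≤ ENNReal.ofReal (Real.exp (ε j)) * setProb (ν' j) S +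
        ENNReal.ofReal (δ j) ∧
      setProb (ν' j) S ≤ ENNReal.ofReal (Real.exp (ε j)) * setProb (ν j) S +
        ENNReal.ofReal (δ j)) :
    ∀ S : Set (∀ j, Ω j),
      setProb (fun f : (∀ j, Ω j) => ∏ j, ν j (f j)) S ≤
        ENNReal.ofReal (Real.exp (∑ j, ε j)) *
          setProb (fun f : (∀ j, Ω j) => ∏ j, ν' j (f j)) S +
        ENNReal.ofReal (∑ j, δ j) ∧
      setProb (fun f : (∀ j, Ω j) => ∏ j, ν' j (f j)) S ≤
        ENNReal.ofReal (Real.exp (∑ j, ε j)) *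
          setProb (fun f : (∀ j, Ω j) => ∏ j, ν j (f j)) S +
        ENNReal.ofReal (∑ j, δ j) := by
  have hE : ∀ j, ENNReal.ofReal (Real.exp (ε j)) ≠ ∞ := fun _ => ENNReal.ofReal_ne_top
  have hexp : ∏ j, ENNReal.ofReal (Real.exp (ε j)) = ENNReal.ofReal (Real.exp (∑ j, ε j)) := by
    rw [Real.exp_sum, ENNReal.ofReal_prod_of_nonneg fun j _ => (Real.exp_pos (ε j)).le]
  have hδ : ∑ j, ENNReal.ofReal (δ j) = ENNReal.ofReal (∑ j, δ j) :=
    (ENNReal.ofReal_sum_of_nonneg fun j _ => hδ0 j).symm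
  have hνν' := OneSidedIndist.piDist (fun j S => (hind j S).1) hE hprob hprob'
  have hν'ν := OneSidedIndist.piDist (fun j S => (hind j S).2) hE hprob' hprob
  rw [hexp, hδ] at hνν' hν'ν
  exact fun S => ⟨hνν' S, hν'ν S⟩

/-- Composition with heterogeneous privacy parameters: if `ν j` and `ν' j` are
`(ε j, δ j)`-indistinguishable for each `j`, then the product distributions are
`(Σ ε j, Σ δ j)`-indistinguishable. -/
theorem composition_heterogeneous
    (K : ℕ)
    (Ω : Fin K → Type*) [∀ j, Countable (Ω j)]
    (ν ν' : ∀ j : Fin K, Ω j → ℝ≥0∞)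
    (hprob : ∀ j, IsProbDist (ν j)) (hprob' : ∀ j, IsProbDist (ν' j))
    (ε δ : Fin K → ℝ) (hε : ∀ j, 0 ≤ ε j) (hδ0 : ∀ j, 0 ≤ δ j) (hδ1 : ∀ j, δ j ≤ 1)
    (hind : ∀ j, ∀ S : Set (Ω j),
      setProb (ν j) S ≤ ENNReal.ofReal (Real.exp (ε j)) * setProb (ν' j) S +
        ENNReal.ofReal (δ j) ∧
      setProb (ν' j) S ≤ ENNReal.ofReal (Real.exp (ε j)) * setProb (ν j) S +
        ENNReal.ofReal (δ j)) :
    ∀ S : Set (∀ j, Ω j),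
      setProb (fun f : (∀ j, Ω j) => ∏ j, ν j (f j)) S ≤
        ENNReal.ofReal (Real.exp (∑ j, ε j)) *
          setProb (fun f : (∀ j, Ω j) => ∏ j, ν' j (f j)) S +
        ENNReal.ofReal (∑ j, δ j) ∧
      setProb (fun f : (∀ j, Ω j) => ∏ j, ν' j (f j)) S ≤
        ENNReal.ofReal (Real.exp (∑ j, ε j)) *
          setProb (fun f : (∀ j, Ω j) => ∏ j, ν j (f j)) S +
        ENNReal.ofReal (∑ j, δ j) :=
  composition_heterogeneous_general K Ω ν ν' hprob hprob' ε δ hδ0 hind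
end

section
/- For any ε, δ ∈ (0,1) and Δ ∈ ℕ with Δ ≥ 1, set p = e^{−0.2ε/Δ} and r = 3(1 + log(1/δ)). Then the mechanism that maps a nonnegative integer a to the distribution of a + Z, where Z ∼ NB(r, p), is (ε, δ)-differentially private for Δ-summation: for all nonnegative integers a, a' with |a − a'| ≤ Δ and every subset S of the integers, Pr[a + Z ∈ S] ≤ e^ε · Pr[a' + Z ∈ S] + δ. -/
open scoped ENNReal

/-- Probability mass function of the negative binomial distribution `NB(r, p)`:
`Pr(X = k) = (Γ(k+r)/(k!·Γ(r))) · p^k · (1−p)^r`. -/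
noncomputable def nbPMF (r p : ℝ) (k : ℕ) : ℝ :=
  (Real.Gamma (k + r) / (Nat.factorial k * Real.Gamma r)) * p ^ k *
    Real.rpow (1 - p) r

/-- Distribution (on `ℤ`) of `a + Z` where `Z ∼ NB(r, p)`. -/
noncomputable def shiftedNB (r p : ℝ) (a : ℕ) (m : ℤ) : ℝ≥0∞ :=
  if (a : ℤ) ≤ m then ENNReal.ofReal (nbPMF r p (m - (a : ℤ)).toNat) else 0

/-!
Write `f` for the pmf of `NB(r, p)`. Consecutive values satisfy
`f (k + 1) = p (k + r) / (k + 1) f k`, so for `r ≥ 1` moving the argument of `f` up by `d`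
shrinks `f` by at most a factor `p ^ d`, and from `K = ⌈r Δ / ε⌉` on it raises `f` by at most a
factor `e ^ (ε d / Δ)`. Hence `Pr[a + Z = m] ≤ e ^ ε Pr[a' + Z = m]` for every `m ≥ a + K + Δ`,
and the remaining mass `Pr[Z < K + Δ]` is at most
`p ^ (-(K + Δ)) E[p ^ Z] = p ^ (-(K + Δ)) (1 + p) ^ (-r)` (the generating function of `NB(r, p)`
being a binomial series), which the choice of `r` makes at most `δ`.
-/

open Real Finset

theorem Gamma_nat_add_eq_ascPochhammer_mul {r : ℝ} (hr : 0 < r) (k : ℕ) :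
    Gamma (k + r) = (ascPochhammer ℝ k).eval r * Gamma r := by
  induction k with
  | zero => simp
  | succ k ih =>
    rw [Nat.cast_succ, add_right_comm, Gamma_add_one (by positivity), ih,
      ascPochhammer_succ_eval]
    ring

theorem choose_add_sub_one_eq_Gamma_div {r : ℝ} (hr : 0 < r) (k : ℕ) :
    Ring.choose (r + k - 1) k = Gamma (k + r) / (k.factorial * Gamma r) := by
  have h := Ring.factorial_nsmul_multichoose_eq_ascPochhammer r k
  rw [Polynomial.ascPochhammer_smeval_eq_eval, nsmul_eq_mul, Ring.multichoose_eq] at h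
  rw [Gamma_nat_add_eq_ascPochhammer_mul hr, ← h]
  field_simp [(Gamma_pos_of_pos hr).ne', Nat.factorial_ne_zero]

theorem nbPMF_eq_choose {r : ℝ} (hr : 0 < r) (p : ℝ) (k : ℕ) :
    nbPMF r p k = (1 - p) ^ r * (Ring.choose (r + k - 1) k * p ^ k) := by
  rw [nbPMF, choose_add_sub_one_eq_Gamma_div hr, show Real.rpow (1 - p) r = (1 - p) ^ r from rfl]
  ring

theorem hasSum_nbPMF_mul_pow {r p x : ℝ} (hr : 0 < r) (hpx : |p * x| < 1) :
    HasSum (fun k ↦ nbPMF r p k * x ^ k) ((1 - p) ^ r / (1 - p * x) ^ r) := by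
  have h := (one_div_one_sub_rpow_hasFPowerSeriesOnBall_zero r).hasSum (y := p * x)
    (by simpa [Metric.mem_eball, edist_zero_right, enorm_eq_nnnorm, ← ENNReal.coe_one,
      ENNReal.coe_lt_coe, ← NNReal.coe_lt_coe] using hpx)
  simp only [FormalMultilinearSeries.ofScalars_apply_eq, smul_eq_mul, zero_add] at h
  have hterm : (fun k ↦ nbPMF r p k * x ^ k) =
      fun k : ℕ ↦ (1 - p) ^ r * (Ring.choose (r + k - 1) k * (p * x) ^ k) := by
    ext k; rw [nbPMF_eq_choose hr, mul_pow]; ring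
  rw [hterm, ← mul_one_div]
  exact h.mul_left _

theorem nbPMF_succ {r : ℝ} (hr : 0 < r) (p : ℝ) (k : ℕ) :
    nbPMF r p (k + 1) = (k + r) / (k + 1) * p * nbPMF r p k := by
  simp only [nbPMF, Nat.cast_succ, Nat.factorial_succ, Nat.cast_mul]
  rw [add_right_comm, Gamma_add_one (by positivity)]
  field_simp [(Gamma_pos_of_pos hr).ne']
  ring

theorem nbPMF_nonneg {r p : ℝ} (hr : 0 < r) (hp0 : 0 ≤ p) (hp1 : p ≤ 1) (k : ℕ) :
    0 ≤ nbPMF r p k := by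
  have := Gamma_pos_of_pos (show 0 < k + r by positivity)
  have := Gamma_pos_of_pos hr
  have := rpow_nonneg (sub_nonneg.2 hp1) r
  unfold nbPMF
  positivity

theorem pow_mul_nbPMF_le_nbPMF_add {r p : ℝ} (hr : 1 ≤ r) (hp0 : 0 ≤ p) (hp1 : p ≤ 1)
    (k d : ℕ) : p ^ d * nbPMF r p k ≤ nbPMF r p (k + d) := by
  refine geom_le (u := fun j ↦ nbPMF r p (k + j)) hp0 d fun j _ ↦ ?_
  rw [← add_assoc, nbPMF_succ (by linarith)]
  have hratio : 1 ≤ (↑(k + j) + r) / (↑(k + j) + 1) := by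
    rw [one_le_div (by positivity)]; linarith
  exact mul_le_mul_of_nonneg_right (le_mul_of_one_le_left hp0 hratio)
    (nbPMF_nonneg (r := r) (by linarith) hp0 hp1 _)

theorem nbPMF_add_le_exp_mul_nbPMF {r p c : ℝ} {k : ℕ} (hr : 0 < r) (hp0 : 0 ≤ p)
    (hp1 : p ≤ 1) (hc : 0 ≤ c) (hk : r - 1 ≤ c * (k + 1)) (d : ℕ) :
    nbPMF r p (k + d) ≤ exp (c * d) * nbPMF r p k := by
  rw [mul_comm c, exp_nat_mul]
  refine le_geom (u := fun j ↦ nbPMF r p (k + j)) (exp_nonneg c) d fun j _ ↦ ?_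
  rw [← add_assoc, nbPMF_succ hr]
  have hratio : (↑(k + j) + r) / (↑(k + j) + 1) ≤ exp c := by
    rw [div_le_iff₀ (by positivity)]
    have : r - 1 ≤ c * (↑(k + j) + 1) :=
      hk.trans (by push_cast; nlinarith [j.cast_nonneg (α := ℝ)])
    nlinarith [add_one_le_exp c]
  exact mul_le_mul_of_nonneg_right ((mul_le_of_le_one_right (by positivity) hp1).trans hratio)
    (nbPMF_nonneg hr hp0 hp1 _)

-- Chernoff: `Pr[Z < M] ≤ p ^ (-M) E[p ^ Z]`.
theorem sum_range_nbPMF_le {r p : ℝ} (hr : 0 < r) (hp0 : 0 < p) (hp1 : p < 1) (M : ℕ) :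
    ∑ k ∈ range M, nbPMF r p k ≤ (1 + p) ^ (-r) / p ^ M := by
  have hmgf : (1 - p) ^ r / (1 - p * p) ^ r = (1 + p) ^ (-r) := by
    rw [show 1 - p * p = (1 - p) * (1 + p) by ring, mul_rpow (by linarith) (by linarith),
      rpow_neg (by linarith), div_mul_eq_div_div, div_self (by positivity), one_div]
  have hsum := hmgf ▸ hasSum_nbPMF_mul_pow hr (x := p)
    (by rw [abs_lt]; constructor <;> nlinarith)
  have hf := nbPMF_nonneg hr hp0.le hp1.le
  rw [le_div_iff₀ (pow_pos hp0 M), sum_mul]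
  calc ∑ k ∈ range M, nbPMF r p k * p ^ M ≤ ∑ k ∈ range M, nbPMF r p k * p ^ k :=
        sum_le_sum fun k hk ↦ mul_le_mul_of_nonneg_left
          (pow_le_pow_of_le_one hp0.le hp1.le (mem_range.1 hk).le) (hf k)
    _ ≤ (1 + p) ^ (-r) := sum_le_hasSum _ (fun k _ ↦ mul_nonneg (hf k) (by positivity)) hsum

theorem nbPMF_le_exp_mul_nbPMF {r p c t : ℝ} {n k k' : ℕ} (hr : 1 ≤ r) (hp0 : 0 ≤ p)
    (hp1 : p ≤ 1) (hc : 0 ≤ c) (hk' : r - 1 ≤ c * (k' + 1)) (hkk' : k ≤ k' + n)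
    (hk'k : k' ≤ k + n) (hcn : c * n ≤ t) (hpn : exp (-t) ≤ p ^ n) :
    nbPMF r p k ≤ exp t * nbPMF r p k' := by
  rcases le_total k' k with h | h
  · obtain ⟨d, rfl⟩ := Nat.exists_eq_add_of_le h
    calc nbPMF r p (k' + d) ≤ exp (c * d) * nbPMF r p k' :=
          nbPMF_add_le_exp_mul_nbPMF (by linarith) hp0 hp1 hc hk' d
      _ ≤ exp t * nbPMF r p k' := by
          gcongr
          · exact nbPMF_nonneg (by linarith) hp0 hp1 k'
          · exact (mul_le_mul_of_nonneg_left (by exact_mod_cast (by omega : d ≤ n)) hc).trans hcn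
  · obtain ⟨d, rfl⟩ := Nat.exists_eq_add_of_le h
    have hpd : exp (-t) ≤ p ^ d := hpn.trans (pow_le_pow_of_le_one hp0 hp1 (by omega))
    have := (mul_le_mul_of_nonneg_right hpd (nbPMF_nonneg (by linarith) hp0 hp1 k)).trans
      (pow_mul_nbPMF_le_nbPMF_add hr hp0 hp1 k d)
    rwa [exp_neg, inv_mul_le_iff₀ (exp_pos t)] at this

theorem setProb_le_mul_setProb_add_setProb {Ω : Type*} {ν ν' : Ω → ℝ≥0∞}
    {C : ℝ≥0∞} {B : Set Ω} (h : ∀ m ∉ B, ν m ≤ C * ν' m) (S : Set Ω) :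
    setProb ν S ≤ C * setProb ν' S + setProb ν B := by
  have hpt : ∀ m, ν m ≤ C * ν' m + B.indicator ν m := by
    intro m
    by_cases hm : m ∈ B
    · rw [Set.indicator_of_mem hm]; exact le_add_self
    · exact (h m hm).trans le_self_add
  calc setProb ν S ≤ ∑' m : S, (C * ν' m + B.indicator ν m) :=
        ENNReal.tsum_le_tsum fun m ↦ hpt m
    _ = C * setProb ν' S + ∑' m : S, B.indicator ν m := by
        rw [ENNReal.tsum_add, ENNReal.tsum_mul_left, setProb]
    _ ≤ C * setProb ν' S + setProb ν B := by
        unfold setProb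
        rw [_root_.tsum_subtype B ν]
        gcongr
        exact ENNReal.tsum_comp_le_tsum_of_injective Subtype.coe_injective _

theorem setProb_shiftedNB_Iio {r p : ℝ} (hr : 0 < r) (hp0 : 0 ≤ p) (hp1 : p ≤ 1) (a M : ℕ) :
    setProb (shiftedNB r p a) (Set.Iio (a + M : ℤ)) =
      ENNReal.ofReal (∑ k ∈ range M, nbPMF r p k) := by
  rw [ENNReal.ofReal_sum_of_nonneg fun k _ ↦ nbPMF_nonneg hr hp0 hp1 k, setProb,
    _root_.tsum_subtype, tsum_eq_sum (s := (range M).image fun k : ℕ ↦ (a + k : ℤ)),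
    sum_image fun _ _ _ _ h ↦ by omega]
  · refine sum_congr rfl fun k hk ↦ ?_
    rw [mem_range] at hk
    simp [shiftedNB, hk]
  · intro m hm
    simp only [mem_image, mem_range, not_exists, not_and] at hm
    simp only [Set.indicator_apply, Set.mem_Iio, shiftedNB, ite_eq_right_iff]
    intro hmM ham
    exact absurd (by omega) (hm (m - a).toNat (by omega))

theorem setProb_shiftedNB_le {r p c t : ℝ} {n K a a' : ℕ} (hr : 1 ≤ r) (hp0 : 0 ≤ p)
    (hp1 : p ≤ 1) (hc : 0 ≤ c) (hK : r - 1 ≤ c * (K + 1)) (hcn : c * n ≤ t)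
    (hpn : exp (-t) ≤ p ^ n) (hdiff : |(a : ℤ) - a'| ≤ n) (S : Set ℤ) :
    setProb (shiftedNB r p a) S ≤ ENNReal.ofReal (exp t) * setProb (shiftedNB r p a') S +
      ENNReal.ofReal (∑ k ∈ range (K + n), nbPMF r p k) := by
  rw [← setProb_shiftedNB_Iio (by linarith) hp0 hp1]
  refine setProb_le_mul_setProb_add_setProb (fun m hm ↦ ?_) S
  rw [Set.mem_Iio, not_lt] at hm
  rw [abs_le] at hdiff
  have hK' : (K : ℝ) ≤ (m - a').toNat := by exact_mod_cast (by omega : K ≤ (m - a').toNat)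
  rw [shiftedNB, shiftedNB, if_pos (by omega), if_pos (by omega),
    ← ENNReal.ofReal_mul (exp_nonneg t)]
  exact ENNReal.ofReal_le_ofReal (nbPMF_le_exp_mul_nbPMF hr hp0 hp1 hc (hK.trans (by gcongr))
    (by omega) (by omega) hcn hpn)

theorem exp_0_55_le : exp 0.55 ≤ 1.8 := by
  refine (exp_bound' (x := 0.55) (by norm_num) (by norm_num) (n := 4) (by norm_num)).trans ?_
  norm_num [sum_range_succ, Nat.factorial]

theorem one_add_exp_neg_rpow_neg_div_le {δ x r : ℝ} {M : ℕ} (hδ0 : 0 < δ) (hδ1 : δ ≤ 1)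
    (hx : x ≤ 0.2) (hr : r = 3 * (1 + log (1 / δ))) (hM : M * x ≤ 0.2 * r + 0.4) :
    (1 + exp (-x)) ^ (-r) / exp (-x) ^ M ≤ δ := by
  rw [one_div, log_inv] at hr
  have hlog : log δ ≤ 0 := log_nonpos hδ0.le hδ1
  have hbase : exp 0.55 ≤ 1 + exp (-x) := by
    linarith [exp_0_55_le, add_one_le_exp (-x)]
  calc (1 + exp (-x)) ^ (-r) / exp (-x) ^ M ≤ exp 0.55 ^ (-r) / exp (-x) ^ M := by
        gcongr ?_ / _
        exact rpow_le_rpow_of_nonpos (exp_pos _) hbase (by linarith)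
    _ = exp (M * x - 0.55 * r) := by
        rw [← exp_mul, ← exp_nat_mul, ← exp_sub]; ring_nf
    _ ≤ exp (log δ) := exp_le_exp.2 (by linarith)
    _ = δ := exp_log hδ0

theorem nbPMF_lower_tail_le_delta {ε δ p r : ℝ} {Δ K : ℕ} (hε0 : 0 < ε) (hε1 : ε ≤ 1)
    (hδ0 : 0 < δ) (hδ1 : δ ≤ 1) (hΔ : 1 ≤ Δ) (hp : p = exp (-(0.2 * ε / Δ)))
    (hr : r = 3 * (1 + log (1 / δ))) (hK : K * ε ≤ r * Δ + ε) :
    ∑ k ∈ range (K + Δ), nbPMF r p k ≤ δ := by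
  have hΔ1 : (1 : ℝ) ≤ Δ := by exact_mod_cast hΔ
  have hr0 : 0 < r := by rw [hr]; linarith [log_nonneg (one_le_one_div hδ0 hδ1)]
  have hx : 0.2 * ε / Δ ≤ 0.2 := by rw [div_le_iff₀ (by linarith)]; nlinarith
  have hM : ((K + Δ : ℕ) : ℝ) * (0.2 * ε / Δ) ≤ 0.2 * r + 0.4 := by
    rw [← mul_div_assoc, div_le_iff₀ (by linarith)]; push_cast; nlinarith
  calc ∑ k ∈ range (K + Δ), nbPMF r p k ≤ (1 + p) ^ (-r) / p ^ (K + Δ) :=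
        sum_range_nbPMF_le hr0 (hp ▸ exp_pos _)
          (hp ▸ exp_lt_one_iff.2 (by simp only [neg_lt_zero]; positivity)) _
    _ ≤ δ := hp ▸ one_add_exp_neg_rpow_neg_div_le hδ0 hδ1 hx hr hM

/-- For `ε, δ ∈ (0,1)`, `Δ ≥ 1`, `p = e^{−0.2ε/Δ}` and `r = 3(1 + log(1/δ))`, the
mechanism `a ↦ a + NB(r, p)` is `(ε, δ)`-differentially private for `Δ`-summation:
for all nonnegative integers `a, a'` with `|a − a'| ≤ Δ` and every `S ⊆ ℤ`,
`Pr[a + Z ∈ S] ≤ e^ε · Pr[a' + Z ∈ S] + δ`. -/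
theorem nb_mechanism_dp_summation
    (ε δ : ℝ) (hε : ε ∈ Set.Ioo (0 : ℝ) 1) (hδ : δ ∈ Set.Ioo (0 : ℝ) 1)
    (Δ : ℕ) (hΔ : 1 ≤ Δ)
    (p r : ℝ)
    (hp : p = Real.exp (-(0.2 * ε / (Δ : ℝ))))
    (hr : r = 3 * (1 + Real.log (1 / δ)))
    (a a' : ℕ) (hdiff : |(a : ℤ) - (a' : ℤ)| ≤ (Δ : ℤ))
    (S : Set ℤ) :
    setProb (shiftedNB r p a) S ≤
      ENNReal.ofReal (Real.exp ε) * setProb (shiftedNB r p a') S +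
        ENNReal.ofReal δ := by
  obtain ⟨hε0, hε1⟩ := hε
  obtain ⟨hδ0, hδ1⟩ := hδ
  have hΔ0 : (0 : ℝ) < Δ := by exact_mod_cast hΔ
  have hr1 : 1 ≤ r := by rw [hr]; linarith [log_nonneg (one_le_one_div hδ0 hδ1.le)]
  have hp0 : 0 ≤ p := hp ▸ (exp_pos _).le
  have hp1 : p ≤ 1 := hp ▸ exp_le_one_iff.2 (by simp only [neg_nonpos]; positivity)
  have hpΔ : exp (-ε) ≤ p ^ Δ := by
    rw [hp, ← exp_nat_mul, exp_le_exp]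
    field_simp
    nlinarith
  -- from `K` on, the pmf ratio `(k + r) / (k + 1)` is at most `1 + ε / Δ`
  set K := ⌈r * Δ / ε⌉₊
  have hK : r * Δ ≤ K * ε := (div_le_iff₀ hε0).1 (Nat.le_ceil _)
  have hK1 : K * ε ≤ r * Δ + ε := by
    simpa [add_mul, div_mul_cancel₀ _ hε0.ne'] using
      mul_le_mul_of_nonneg_right
        (Nat.ceil_lt_add_one (div_nonneg (by nlinarith) hε0.le)).le hε0.le
  have hKc : r - 1 ≤ ε / Δ * (K + 1) := by
    rw [div_mul_eq_mul_div, le_div_iff₀ hΔ0]; nlinarith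
  calc setProb (shiftedNB r p a) S
      ≤ ENNReal.ofReal (exp ε) * setProb (shiftedNB r p a') S +
          ENNReal.ofReal (∑ k ∈ range (K + Δ), nbPMF r p k) :=
        setProb_shiftedNB_le hr1 hp0 hp1 (by positivity) hKc (div_mul_cancel₀ _ hΔ0.ne').le hpΔ
          hdiff S
    _ ≤ _ := by
        gcongr
        exact nbPMF_lower_tail_le_delta hε0 hε1.le hδ0 hδ1.le hΔ hp hr hK1
end

section
/- Let ε, δ ∈ (0,1), Δ ∈ ℕ with Δ ≥ 1, and set p = e^{−0.2ε/Δ} and r = 3(1 + log(1/δ)). Then for any positive integers K and U, the expected total number of fake queries per client, K·(r/U)·p/(1−p) (i.e., the expectation of the sum of K independent NB(r/U, p) samples), is at most 15·(1 + log(1/δ))·Δ·K/(ε·U); in particular it is O(K·Δ·log(1/δ)/(U·ε)). -/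
/-- With `p = e^{−0.2ε/Δ}` and `r = 3(1 + log(1/δ))`, the expected total number of
fake queries per client, `K·(r/U)·p/(1−p)`, is at most
`15·(1 + log(1/δ))·Δ·K/(ε·U)`; in particular it is `O(K·Δ·log(1/δ)/(U·ε))`. -/
theorem expected_fake_queries_bound
    (ε δ : ℝ) (hε : ε ∈ Set.Ioo (0 : ℝ) 1) (hδ : δ ∈ Set.Ioo (0 : ℝ) 1)
    (Δ : ℕ) (hΔ : 1 ≤ Δ)
    (p r : ℝ)
    (hp : p = Real.exp (-(0.2 * ε / (Δ : ℝ))))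
    (hr : r = 3 * (1 + Real.log (1 / δ)))
    (K U : ℕ) (hK : 0 < K) (hU : 0 < U) :
    (K : ℝ) * (r / (U : ℝ)) * p / (1 - p) ≤
      15 * (1 + Real.log (1 / δ)) * (Δ : ℝ) * (K : ℝ) / (ε * (U : ℝ)) := by
  obtain ⟨hε0, hε1⟩ := hε
  obtain ⟨hδ0, hδ1⟩ := hδ
  have hΔ0 : (0:ℝ) < (Δ:ℝ) := by exact_mod_cast hΔ
  set x : ℝ := 0.2 * ε / (Δ:ℝ) with hx
  have hx0 : 0 < x := by positivity
  have hp1 : p < 1 := by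
    rw [hp]; exact Real.exp_lt_one_iff.mpr (by linarith)
  have hp0 : 0 < p := by rw [hp]; exact Real.exp_pos _
  have h1p : 0 < 1 - p := by linarith
  -- p/(1-p) ≤ 1/x
  have hkey : p / (1 - p) ≤ 1 / x := by
    rw [div_le_div_iff₀ h1p hx0]
    have hxe : x + 1 ≤ Real.exp x := Real.add_one_le_exp x
    have hpe : p * Real.exp x = 1 := by
      rw [hp, ← Real.exp_add]; simp
    nlinarith [hpe, hxe, hp0]
  have hL : 0 < 1 + Real.log (1 / δ) := by
    have : 0 < Real.log (1 / δ) := Real.log_pos (by rw [lt_div_iff₀ hδ0]; linarith)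
    linarith
  have hr0 : 0 < r := by rw [hr]; linarith
  have hU0 : (0:ℝ) < (U:ℝ) := by exact_mod_cast hU
  have hK0 : (0:ℝ) ≤ (K:ℝ) := by positivity
  have hcoef : 0 ≤ (K:ℝ) * (r / (U:ℝ)) := by positivity
  calc (K : ℝ) * (r / (U : ℝ)) * p / (1 - p)
      = (K : ℝ) * (r / (U : ℝ)) * (p / (1 - p)) := by ring
    _ ≤ (K : ℝ) * (r / (U : ℝ)) * (1 / x) := by
        exact mul_le_mul_of_nonneg_left hkey hcoef
    _ = 15 * (1 + Real.log (1 / δ)) * (Δ : ℝ) * (K : ℝ) / (ε * (U : ℝ)) := by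
        rw [hr, hx]
        field_simp
        ring
end

section
/- Let d be a positive integer, t > 1 a real number, and p > 0 a real scaling factor satisfying p < √((t−1)/2) − √d/2. Then for any vectors e, q ∈ ℝ^d with ‖e‖₂ ≤ 1 and ‖q‖₂ ≤ 1, the fixed-point inner product does not wrap around modulo t: |Σ_{i=1}^{d} ⌊p·e_i⌉ · ⌊p·q_i⌉| ≤ (t−1)/2, where ⌊x⌉ denotes rounding x to a nearest integer (so that |⌊x⌉ − x| ≤ 1/2). -/
/-!
Rounding moves each coordinate by at most `1/2`, hence a vector by at most `√d / 2` in the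
Euclidean norm, so the rounded vectors of `p • e` and `p • q` have norm at most `p + √d / 2`.
Cauchy–Schwarz then bounds their inner product by `(p + √d / 2)²`, which the hypothesis on `p`
keeps below `(t - 1) / 2`.
-/

open Real

namespace EuclideanSpace

variable {ι : Type*}

theorem norm_le_sqrt_card_mul_of_forall_abs_le [Fintype ι] {x : EuclideanSpace ℝ ι} {C : ℝ}
    (hx : ∀ i, |x i| ≤ C) : ‖x‖ ≤ √(Fintype.card ι) * C := by
  cases isEmpty_or_nonempty ι
  · simp [Subsingleton.elim x 0]
  have hC : 0 ≤ C := (abs_nonneg _).trans (hx (Classical.arbitrary ι))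
  calc ‖x‖ = √(∑ i, ‖x i‖ ^ 2) := norm_eq x
    _ ≤ √(∑ _ : ι, C ^ 2) := by
      gcongr with i
      exact hx i
    _ = √(Fintype.card ι) * C := by
      rw [Finset.sum_const, Finset.card_univ, nsmul_eq_mul, sqrt_mul (Nat.cast_nonneg _),
        sqrt_sq hC]

noncomputable def round (v : EuclideanSpace ℝ ι) : EuclideanSpace ℝ ι :=
  WithLp.toLp 2 fun i => ((_root_.round (v i) : ℤ) : ℝ)

@[simp]
theorem round_apply (v : EuclideanSpace ℝ ι) (i : ι) :
    round v i = ((_root_.round (v i) : ℤ) : ℝ) := rfl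

theorem norm_round_sub_le [Fintype ι] (v : EuclideanSpace ℝ ι) :
    ‖round v - v‖ ≤ √(Fintype.card ι) / 2 := by
  rw [div_eq_mul_one_div]
  refine norm_le_sqrt_card_mul_of_forall_abs_le fun i => ?_
  rw [PiLp.sub_apply, round_apply, abs_sub_comm]
  exact abs_sub_round (v i)

theorem norm_round_le [Fintype ι] (v : EuclideanSpace ℝ ι) :
    ‖round v‖ ≤ ‖v‖ + √(Fintype.card ι) / 2 :=
  calc ‖round v‖ = ‖v + (round v - v)‖ := by rw [add_sub_cancel]
    _ ≤ ‖v‖ + ‖round v - v‖ := norm_add_le _ _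
    _ ≤ ‖v‖ + √(Fintype.card ι) / 2 := by gcongr; exact norm_round_sub_le v

theorem norm_round_smul_le [Fintype ι] {v : EuclideanSpace ℝ ι} (hv : ‖v‖ ≤ 1) {p : ℝ}
    (hp : 0 ≤ p) : ‖round (p • v)‖ ≤ p + √(Fintype.card ι) / 2 :=
  calc ‖round (p • v)‖ ≤ ‖p • v‖ + √(Fintype.card ι) / 2 := norm_round_le _
    _ ≤ p + √(Fintype.card ι) / 2 := by
      rw [norm_smul, Real.norm_of_nonneg hp]
      gcongr
      exact mul_le_of_le_one_right hp hv

end EuclideanSpace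

theorem fixed_point_inner_product_no_wraparound_general
    (d : ℕ) (t : ℝ)
    (p : ℝ) (hp : 0 < p)
    (hpt : p < Real.sqrt ((t - 1) / 2) - Real.sqrt d / 2)
    (e q : EuclideanSpace ℝ (Fin d)) (he : ‖e‖ ≤ 1) (hq : ‖q‖ ≤ 1) :
    |∑ i, ((round (p * e i) : ℤ) : ℝ) * ((round (p * q i) : ℤ) : ℝ)| ≤
      (t - 1) / 2 := by
  have hsum : ∑ i, ((round (p * e i) : ℤ) : ℝ) * ((round (p * q i) : ℤ) : ℝ) =
      inner ℝ (EuclideanSpace.round (p • q)) (EuclideanSpace.round (p • e)) := by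
    simp [PiLp.inner_apply]
  have hr : 0 ≤ p + √d / 2 := by positivity
  have hr_sq : (p + √d / 2) ^ 2 < (t - 1) / 2 := (lt_sqrt hr).mp (lt_sub_iff_add_lt.mp hpt)
  have hq' := EuclideanSpace.norm_round_smul_le hq hp.le
  have he' := EuclideanSpace.norm_round_smul_le he hp.le
  rw [Fintype.card_fin] at hq' he'
  calc _ = _ := by rw [hsum]
    _ ≤ ‖EuclideanSpace.round (p • q)‖ * ‖EuclideanSpace.round (p • e)‖ :=
      abs_real_inner_le_norm _ _
    _ ≤ (p + √d / 2) * (p + √d / 2) := mul_le_mul hq' he' (norm_nonneg _) hr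
    _ ≤ (t - 1) / 2 := by rw [← sq]; exact hr_sq.le

/-- Fixed-point inner products of unit-norm embeddings do not wrap around the
plaintext modulus: if `p < √((t−1)/2) − √d/2`, then for any `e, q ∈ ℝ^d` with
`‖e‖₂ ≤ 1` and `‖q‖₂ ≤ 1`, `|Σᵢ ⌊p·eᵢ⌉·⌊p·qᵢ⌉| ≤ (t−1)/2`, where `⌊·⌉` rounds to a
nearest integer. -/
theorem fixed_point_inner_product_no_wraparound
    (d : ℕ) (hd : 0 < d) (t : ℝ) (ht : 1 < t)
    (p : ℝ) (hp : 0 < p)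
    (hpt : p < Real.sqrt ((t - 1) / 2) - Real.sqrt d / 2)
    (e q : EuclideanSpace ℝ (Fin d)) (he : ‖e‖ ≤ 1) (hq : ‖q‖ ≤ 1) :
    |∑ i, ((round (p * e i) : ℤ) : ℝ) * ((round (p * q i) : ℤ) : ℝ)| ≤
      (t - 1) / 2 :=
  fixed_point_inner_product_no_wraparound_general d t p hp hpt e q he hq
end

section
/- Let n ≥ 1 and work in the ring R = ℤ[X]/(X^n + 1), identifying elements with their representatives of degree less than n. Let s, c₀, c₁ ∈ R and suppose c₀ = 2^{b₀}·c₀ʰ + c₀ˡ and c₁ = 2^{b₁}·c₁ʰ + c₁ˡ for nonnegative integers b₀, b₁ and elements c₀ʰ, c₀ˡ, c₁ʰ, c₁ˡ ∈ R with ‖c₀ˡ‖_∞ ≤ 2^{b₀} − 1 and ‖c₁ˡ‖_∞ ≤ 2^{b₁} − 1. Define e_drop = −(c₀ˡ + c₁ˡ·s). Then: (1) 2^{b₀}·c₀ʰ + 2^{b₁}·c₁ʰ·s = (c₀ + c₁·s) + e_drop in R, so if c₀ + c₁·s = D·m + e for a scalar D and m, e ∈ R, then 2^{b₀}·c₀ʰ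 + 2^{b₁}·c₁ʰ·s = D·m + e + e_drop; and (2) if the secret s has all coefficients in {−1, 0, 1}, then ‖e_drop‖_∞ ≤ (2^{b₀} − 1) + n·(2^{b₁} − 1). -/
/-- Coefficient `k` of the full (integer) product of two polynomials given by their
coefficient sequences. -/
def fullMulCoeff (a b : ℕ → ℤ) (k : ℕ) : ℤ :=
  ∑ j ∈ Finset.range (k + 1), a j * b (k - j)

/-- Coefficient `k` (for `k < n`) of the unique degree-`< n` representative of the
product `a·b` modulo `X^n + 1` (negacyclic convolution, identifying `X^n = −1`). -/
def negacyclicMulCoeff (n : ℕ) (a b : ℕ → ℤ) (k : ℕ) : ℤ :=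
  fullMulCoeff a b k - fullMulCoeff a b (k + n)

lemma fullMulCoeff_lin (C : ℤ) (a b s : ℕ → ℤ) (k : ℕ) :
    fullMulCoeff (fun j => C * a j + b j) s k
      = C * fullMulCoeff a s k + fullMulCoeff b s k := by
  simp [fullMulCoeff, Finset.mul_sum, Finset.sum_add_distrib, add_mul, mul_assoc]

lemma negacyclicMulCoeff_lin (n : ℕ) (C : ℤ) (a b s : ℕ → ℤ) (k : ℕ) :
    negacyclicMulCoeff n (fun j => C * a j + b j) s k
      = C * negacyclicMulCoeff n a s k + negacyclicMulCoeff n b s k := by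
  simp only [negacyclicMulCoeff, fullMulCoeff_lin]; ring

/-- Noise analysis of dropping the least significant bits of an RLWE ciphertext in
`R = ℤ[X]/(X^n + 1)` (elements represented by coefficient sequences supported on
degrees `< n`). Writing `c₀ = 2^{b₀}·c₀ʰ + c₀ˡ` and `c₁ = 2^{b₁}·c₁ʰ + c₁ˡ` with
`‖c₀ˡ‖_∞ ≤ 2^{b₀} − 1`, `‖c₁ˡ‖_∞ ≤ 2^{b₁} − 1`, and setting
`e_drop = −(c₀ˡ + c₁ˡ·s)`:
(1) `2^{b₀}·c₀ʰ + 2^{b₁}·c₁ʰ·s = (c₀ + c₁·s) + e_drop` in `R`, and hence if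
`c₀ + c₁·s = D·m + e` then `2^{b₀}·c₀ʰ + 2^{b₁}·c₁ʰ·s = D·m + e + e_drop`;
(2) if the secret `s` has all coefficients in `{−1, 0, 1}`, then
`‖e_drop‖_∞ ≤ (2^{b₀} − 1) + n·(2^{b₁} − 1)`. -/
theorem drop_lsb_noise_analysis
    (n : ℕ) (hn : 1 ≤ n)
    (s c₀ c₁ c₀h c₀l c₁h c₁l : ℕ → ℤ)
    (hs0 : ∀ i, n ≤ i → s i = 0)
    (hc₀0 : ∀ i, n ≤ i → c₀ i = 0) (hc₁0 : ∀ i, n ≤ i → c₁ i = 0)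
    (hc₀h0 : ∀ i, n ≤ i → c₀h i = 0) (hc₀l0 : ∀ i, n ≤ i → c₀l i = 0)
    (hc₁h0 : ∀ i, n ≤ i → c₁h i = 0) (hc₁l0 : ∀ i, n ≤ i → c₁l i = 0)
    (b₀ b₁ : ℕ)
    (hsplit₀ : ∀ k, c₀ k = 2 ^ b₀ * c₀h k + c₀l k)
    (hsplit₁ : ∀ k, c₁ k = 2 ^ b₁ * c₁h k + c₁l k)
    (hlow₀ : ∀ k, |c₀l k| ≤ 2 ^ b₀ - 1)
    (hlow₁ : ∀ k, |c₁l k| ≤ 2 ^ b₁ - 1)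
    (eDrop : ℕ → ℤ)
    (heDrop : ∀ k, eDrop k = -(c₀l k + negacyclicMulCoeff n c₁l s k)) :
    -- (1) the decryption identity after dropping bits
    ((∀ k, 2 ^ b₀ * c₀h k + 2 ^ b₁ * negacyclicMulCoeff n c₁h s k =
        (c₀ k + negacyclicMulCoeff n c₁ s k) + eDrop k) ∧
      (∀ (D : ℤ) (m e : ℕ → ℤ),
        (∀ k, c₀ k + negacyclicMulCoeff n c₁ s k = D * m k + e k) →
        ∀ k, 2 ^ b₀ * c₀h k + 2 ^ b₁ * negacyclicMulCoeff n c₁h s k =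
          D * m k + e k + eDrop k)) ∧
    -- (2) the bound on the added noise for a ternary secret
    ((∀ i, s i = -1 ∨ s i = 0 ∨ s i = 1) →
      ∀ k < n, |eDrop k| ≤ (2 ^ b₀ - 1) + (n : ℤ) * (2 ^ b₁ - 1)) := by
  have hc₁eq : c₁ = fun j => 2 ^ b₁ * c₁h j + c₁l j := funext hsplit₁
  have key : ∀ k, 2 ^ b₀ * c₀h k + 2 ^ b₁ * negacyclicMulCoeff n c₁h s k =
      (c₀ k + negacyclicMulCoeff n c₁ s k) + eDrop k := by
    intro k
    rw [heDrop k, hsplit₀ k, hc₁eq, negacyclicMulCoeff_lin]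
    ring
  refine ⟨⟨key, ?_⟩, ?_⟩
  · intro D m e hdec k
    rw [key k, hdec k]
  · intro hter k hk
    have hsb : ∀ i, |s i| ≤ 1 := by
      intro i; rcases hter i with h | h | h <;> simp [h]
    set B : ℤ := 2 ^ b₁ - 1 with hB
    have hB0 : 0 ≤ B := by
      have : (1:ℤ) ≤ 2 ^ b₁ := one_le_pow₀ (by norm_num)
      omega
    -- bound the first full coefficient
    have h1 : |fullMulCoeff c₁l s k| ≤ (k + 1 : ℤ) * B := by
      calc |fullMulCoeff c₁l s k|
          ≤ ∑ j ∈ Finset.range (k + 1), |c₁l j * s (k - j)| :=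
            Finset.abs_sum_le_sum_abs _ _
        _ ≤ ∑ _j ∈ Finset.range (k + 1), B := by
            refine Finset.sum_le_sum fun j _ => ?_
            rw [abs_mul]
            calc |c₁l j| * |s (k - j)| ≤ B * 1 :=
              mul_le_mul (hlow₁ j) (hsb _) (abs_nonneg _) hB0
            _ = B := mul_one B
        _ = (k + 1 : ℤ) * B := by simp [mul_comm]
    -- bound the second full coefficient
    have h2 : |fullMulCoeff c₁l s (k + n)| ≤ ((n - (k + 1) : ℕ) : ℤ) * B := by
      have hsub : Finset.Ico (k + 1) n ⊆ Finset.range (k + n + 1) := by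
        intro j hj
        simp only [Finset.mem_Ico, Finset.mem_range] at *
        omega
      have hrw : fullMulCoeff c₁l s (k + n)
          = ∑ j ∈ Finset.Ico (k + 1) n, c₁l j * s (k + n - j) := by
        rw [fullMulCoeff]
        refine (Finset.sum_subset hsub ?_).symm
        intro j hjr hj
        simp only [Finset.mem_Ico, Finset.mem_range, not_and_or, not_lt, not_le] at hjr hj
        rcases hj with hj | hj
        · have : n ≤ k + n - j := by omega
          rw [hs0 _ this, mul_zero]
        · rw [hc₁l0 _ hj, zero_mul]
      rw [hrw]
      calc |∑ j ∈ Finset.Ico (k + 1) n, c₁l j * s (k + n - j)|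
          ≤ ∑ j ∈ Finset.Ico (k + 1) n, |c₁l j * s (k + n - j)| :=
            Finset.abs_sum_le_sum_abs _ _
        _ ≤ ∑ _j ∈ Finset.Ico (k + 1) n, B := by
            refine Finset.sum_le_sum fun j _ => ?_
            rw [abs_mul]
            calc |c₁l j| * |s (k + n - j)| ≤ B * 1 :=
              mul_le_mul (hlow₁ j) (hsb _) (abs_nonneg _) hB0
            _ = B := mul_one B
        _ = ((n - (k + 1) : ℕ) : ℤ) * B := by
            rw [Finset.sum_const, Nat.card_Ico, nsmul_eq_mul]
    have hmul : |negacyclicMulCoeff n c₁l s k| ≤ (n : ℤ) * B := by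
      have : |negacyclicMulCoeff n c₁l s k|
          ≤ |fullMulCoeff c₁l s k| + |fullMulCoeff c₁l s (k + n)| := abs_sub _ _
      have hcast : ((k + 1 : ℤ)) + ((n - (k + 1) : ℕ) : ℤ) = (n : ℤ) := by
        have : (k + 1) + (n - (k + 1)) = n := by omega
        push_cast [Nat.cast_sub (by omega : k + 1 ≤ n)]
        ring
      nlinarith [h1, h2]
    rw [heDrop k, abs_neg]
    calc |c₀l k + negacyclicMulCoeff n c₁l s k|
        ≤ |c₀l k| + |negacyclicMulCoeff n c₁l s k| := abs_add_le _ _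
      _ ≤ (2 ^ b₀ - 1) + (n : ℤ) * B := add_le_add (hlow₀ k) hmul
end
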